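/- Let q : ℝⁿ → (1,∞) with 1 < q_- ≤ q_+ < ∞ be such that both M is bounded on L^{q(·)}(ℝⁿ) and on L^{q'(·)}(ℝⁿ). Then there is C > 0 with C⁻¹ ≤ |B|⁻¹ ‖χ_B‖_{L^{q(·)}} ‖χ_B‖_{L^{q'(·)}} ≤ C for every ball B ⊂ ℝⁿ. -/

import Mathlib

open MeasureTheory Metric
open scoped ENNReal

/-- The Luxemburg norm of `f` in the variable exponent Lebesgue space `L^{q(·)}(ℝⁿ)`. -/
noncomputable def vLpNorm {n : ℕ} (q : EuclideanSpace ℝ (Fin n) → ℝ)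
    (f : EuclideanSpace ℝ (Fin n) → ℝ) : ℝ≥0∞ :=
  sInf {η : ℝ≥0∞ | η ≠ 0 ∧ ∫⁻ x, ((‖f x‖₊ : ℝ≥0∞) / η) ^ (q x) ≤ 1}

/-- The Hardy–Littlewood maximal operator `Mf(x) = sup_{r>0} r^{-n} ∫_{B(x,r)} |f|`. -/
noncomputable def maxOp {n : ℕ} (f : EuclideanSpace ℝ (Fin n) → ℝ)
    (x : EuclideanSpace ℝ (Fin n)) : ℝ :=
  ⨆ r : {r : ℝ // 0 < r}, (r : ℝ) ^ (-(n:ℝ)) * ∫ y in ball x (r : ℝ), |f y|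

/-!
The lower bound is Hölder's inequality `∫ |f g| ≤ 2 ‖f‖_{q(·)} ‖g‖_{q'(·)}` for Luxemburg norms,
obtained by integrating Young's inequality, applied to `f = g = χ_B`.

For the upper bound let `B = closedBall c r`, `N = ‖χ_B‖_{q(·)}`, `β = N / ((A + 1) (3r)ⁿ)`, where
`A` bounds `M` on `L^{q(·)}`, and `s = β^{1/(q-1)}`, so that `s^q = β^{q'}`. It suffices to show
`∫_B s^q ≤ 1`, i.e. `‖χ_B‖_{q'(·)} ≤ (A + 1) (3r)ⁿ / N`. For a bounded truncation `t ≤ s` put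
`ρ = ∫_B t^q`. Since `M(t χ_B) ≥ (3r)⁻ⁿ ∫_B t` on `B`, testing `M` on `t χ_B` gives
`(∫_B t) N ≤ (3r)ⁿ A max(1, ρ)`, while `t^q ≤ s^{q-1} t = β t` gives `(A + 1) (3r)ⁿ ρ ≤ N ∫_B t`.
Hence `(A + 1) ρ ≤ A max(1, ρ)`, which forces `ρ ≤ 1`, and Fatou's lemma removes the truncation.
Dividing by `|B| = rⁿ |B(0, 1)|` makes both bounds independent of the ball.
-/

theorem le_one_of_add_one_mul_le_mul_max_one {A ρ : ℝ≥0∞} (hA : A ≠ ∞) (hρ : ρ ≠ ∞)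
    (h : (A + 1) * ρ ≤ A * max 1 ρ) : ρ ≤ 1 := by
  by_contra! h1
  rw [max_eq_right h1.le] at h
  exact (ENNReal.lt_add_right hA one_ne_zero).not_ge
    ((ENNReal.mul_le_mul_iff_left (zero_lt_one.trans h1).ne' hρ).1 h)

theorem rpow_le_rpow_sub_one_mul_of_le {t s q : ℝ} (ht : 0 ≤ t) (hts : t ≤ s) (hq : 1 ≤ q) :
    t ^ q ≤ s ^ (q - 1) * t := by
  calc t ^ q = t ^ (q - 1) * t ^ (1 : ℝ) := by
        rw [← Real.rpow_add' ht (by linarith), sub_add_cancel]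
    _ ≤ s ^ (q - 1) * t := by
        rw [Real.rpow_one]
        gcongr

theorem ofReal_rpow_eq_ofReal_rpow_inv_sub_one_rpow {q p β : ℝ} (hqp : q.HolderConjugate p)
    (hβ : 0 ≤ β) : ENNReal.ofReal β ^ p = ENNReal.ofReal (β ^ (q - 1)⁻¹) ^ q := by
  rw [ENNReal.ofReal_rpow_of_nonneg (Real.rpow_nonneg hβ _) hqp.nonneg, ← Real.rpow_mul hβ,
    inv_mul_eq_div, ← hqp.conjugate_eq, ENNReal.ofReal_rpow_of_nonneg hβ hqp.symm.nonneg]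

theorem lintegral_ofReal_rpow_le_of_forall_min {α : Type*} [MeasurableSpace α] {μ : Measure α}
    {s q : α → ℝ} (hs : Measurable s) (hq : Measurable q) {c : ℝ≥0∞}
    (h : ∀ m : ℕ, ∫⁻ x, ENNReal.ofReal (min (s x) m) ^ q x ∂μ ≤ c) :
    ∫⁻ x, ENNReal.ofReal (s x) ^ q x ∂μ ≤ c := by
  have hlim : ∀ x, Filter.liminf (fun m : ℕ => ENNReal.ofReal (min (s x) m) ^ q x) Filter.atTop =
      ENNReal.ofReal (s x) ^ q x := fun x => by
    refine (Filter.liminf_congr ?_).trans (Filter.liminf_const _)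
    filter_upwards [Filter.eventually_ge_atTop ⌈s x⌉₊] with m hm
    rw [min_eq_left ((Nat.le_ceil _).trans (by exact_mod_cast hm))]
  calc ∫⁻ x, ENNReal.ofReal (s x) ^ q x ∂μ
      = ∫⁻ x, Filter.liminf (fun m : ℕ => ENNReal.ofReal (min (s x) m) ^ q x) Filter.atTop ∂μ := by
        simp_rw [hlim]
    _ ≤ Filter.liminf (fun m : ℕ => ∫⁻ x, ENNReal.ofReal (min (s x) m) ^ q x ∂μ) Filter.atTop :=
        lintegral_liminf_le fun m => (hs.min measurable_const).ennreal_ofReal.pow hq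
    _ ≤ c := Filter.liminf_le_of_frequently_le' (Filter.Frequently.of_forall h)

theorem closedBall_subset_ball_three_mul {X : Type*} [PseudoMetricSpace X] {c x : X} {r : ℝ}
    (hr : 0 < r) (hx : x ∈ closedBall c r) : closedBall c r ⊆ ball x (3 * r) := fun y hy => by
  rw [mem_ball]
  calc dist y x ≤ dist y c + dist x c := dist_triangle_right _ _ _
    _ ≤ r + r := add_le_add (mem_closedBall.1 hy) (mem_closedBall.1 hx)
    _ < 3 * r := by linarith

section LuxemburgNorm

variable {n : ℕ} {q f : EuclideanSpace ℝ (Fin n) → ℝ}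

theorem vLpNorm_le_of_lintegral_le_one {η : ℝ≥0∞} (hη : η ≠ 0)
    (h : ∫⁻ x, (‖f x‖ₑ / η) ^ q x ≤ 1) : vLpNorm q f ≤ η :=
  sInf_le ⟨hη, h⟩

theorem le_vLpNorm {a : ℝ≥0∞}
    (h : ∀ η, η ≠ 0 → ∫⁻ x, (‖f x‖ₑ / η) ^ q x ≤ 1 → a ≤ η) : a ≤ vLpNorm q f :=
  le_sInf fun η hη => h η hη.1 hη.2

theorem vLpNorm_mono {g : EuclideanSpace ℝ (Fin n) → ℝ} (hq : ∀ x, 0 ≤ q x)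
    (hfg : ∀ x, ‖f x‖ ≤ ‖g x‖) : vLpNorm q f ≤ vLpNorm q g :=
  sInf_le_sInf fun _ hη => ⟨hη.1, le_trans (lintegral_mono fun x =>
    ENNReal.rpow_le_rpow (ENNReal.div_le_div_right (enorm_le_iff_norm_le.2 (hfg x)) _) (hq x)) hη.2⟩

theorem enorm_mul_vLpNorm_le (c : ℝ) : ‖c‖ₑ * vLpNorm q f ≤ vLpNorm q fun x => c * f x := by
  rcases eq_or_ne c 0 with rfl | hc
  · simp
  have hc0 : ‖c‖ₑ ≠ 0 := enorm_ne_zero.2 hc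
  refine le_vLpNorm fun η hη hmod => ?_
  suffices vLpNorm q f ≤ η / ‖c‖ₑ by
    calc ‖c‖ₑ * vLpNorm q f ≤ ‖c‖ₑ * (η / ‖c‖ₑ) := by gcongr
      _ = η := ENNReal.mul_div_cancel hc0 enorm_ne_top
  refine vLpNorm_le_of_lintegral_le_one (by simp [hη]) ?_
  convert hmod using 4 with x
  rw [enorm_mul, div_eq_mul_inv ‖f x‖ₑ, ENNReal.inv_div (Or.inl enorm_ne_top) (Or.inl hc0),
    ← mul_div_assoc, mul_comm]

theorem vLpNorm_le_max_one_lintegral (hq : ∀ x, 1 ≤ q x) :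
    vLpNorm q f ≤ max 1 (∫⁻ x, ‖f x‖ₑ ^ q x) := by
  set ρ := ∫⁻ x, ‖f x‖ₑ ^ q x
  have h1 : 1 ≤ max 1 ρ := le_max_left _ _
  refine vLpNorm_le_of_lintegral_le_one (ne_bot_of_le_ne_bot one_ne_zero h1) ?_
  have hpt : ∀ x, (‖f x‖ₑ / max 1 ρ) ^ q x ≤ ‖f x‖ₑ ^ q x * (max 1 ρ)⁻¹ := fun x => by
    rw [ENNReal.div_rpow_of_nonneg _ _ (zero_le_one.trans (hq x)), div_eq_mul_inv]
    gcongr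
    calc max 1 ρ = max 1 ρ ^ (1 : ℝ) := (ENNReal.rpow_one _).symm
      _ ≤ max 1 ρ ^ q x := ENNReal.rpow_le_rpow_of_exponent_le h1 (hq x)
  calc ∫⁻ x, (‖f x‖ₑ / max 1 ρ) ^ q x ≤ ∫⁻ x, ‖f x‖ₑ ^ q x * (max 1 ρ)⁻¹ := lintegral_mono hpt
    _ = ρ * (max 1 ρ)⁻¹ := lintegral_mul_const' _ _ (ENNReal.inv_ne_top.2 (by positivity))
    _ ≤ 1 := by
      rw [← div_eq_mul_inv]
      exact ENNReal.div_le_of_le_mul (by rw [one_mul]; exact le_max_right _ _)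

theorem lintegral_enorm_indicator_div_rpow (hq : ∀ x, 0 < q x)
    {B : Set (EuclideanSpace ℝ (Fin n))} (hB : MeasurableSet B) (η : ℝ≥0∞) :
    ∫⁻ x, (‖B.indicator f x‖ₑ / η) ^ q x = ∫⁻ x in B, (‖f x‖ₑ / η) ^ q x := by
  rw [← lintegral_indicator hB]
  congr 1 with x
  by_cases hx : x ∈ B
  · simp [hx]
  · simp [hx, ENNReal.zero_rpow_of_pos (hq x)]

end LuxemburgNorm

section Holder

variable {n : ℕ} {q p f g : EuclideanSpace ℝ (Fin n) → ℝ}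

theorem lintegral_mul_le_two_mul_of_modular_le_one (hqp : ∀ x, (q x).HolderConjugate (p x))
    (hq : Measurable q) (hf : Measurable f) {η η' : ℝ≥0∞} (hη : η ≠ 0) (hη' : η' ≠ 0)
    (hfη : ∫⁻ x, (‖f x‖ₑ / η) ^ q x ≤ 1) (hgη' : ∫⁻ x, (‖g x‖ₑ / η') ^ p x ≤ 1) :
    ∫⁻ x, ‖f x‖ₑ * ‖g x‖ₑ ≤ 2 * η * η' := by
  rcases eq_or_ne η ∞ with rfl | hηt
  · simp [hη']
  rcases eq_or_ne η' ∞ with rfl | hη't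
  · simp [hη]
  have hyoung : ∀ x,
      ‖f x‖ₑ * ‖g x‖ₑ * (η * η')⁻¹ ≤ (‖f x‖ₑ / η) ^ q x + (‖g x‖ₑ / η') ^ p x := fun x => by
    have h1 : (1 : ℝ≥0∞) ≤ ENNReal.ofReal (q x) := ENNReal.one_le_ofReal.2 (hqp x).lt.le
    have h2 : (1 : ℝ≥0∞) ≤ ENNReal.ofReal (p x) := ENNReal.one_le_ofReal.2 (hqp x).symm.lt.le
    calc ‖f x‖ₑ * ‖g x‖ₑ * (η * η')⁻¹ = (‖f x‖ₑ / η) * (‖g x‖ₑ / η') := by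
          rw [ENNReal.mul_inv (Or.inl hη) (Or.inl hηt), div_eq_mul_inv, div_eq_mul_inv]; ring
      _ ≤ (‖f x‖ₑ / η) ^ q x / ENNReal.ofReal (q x) + (‖g x‖ₑ / η') ^ p x / ENNReal.ofReal (p x) :=
          ENNReal.young_inequality _ _ (hqp x)
      _ ≤ (‖f x‖ₑ / η) ^ q x + (‖g x‖ₑ / η') ^ p x := by
          gcongr <;> exact ENNReal.div_le_of_le_mul (le_mul_of_one_le_right' ‹_›)
  have hint : (∫⁻ x, ‖f x‖ₑ * ‖g x‖ₑ) * (η * η')⁻¹ ≤ 2 := by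
    calc (∫⁻ x, ‖f x‖ₑ * ‖g x‖ₑ) * (η * η')⁻¹
        = ∫⁻ x, ‖f x‖ₑ * ‖g x‖ₑ * (η * η')⁻¹ :=
          (lintegral_mul_const' _ _ (ENNReal.inv_ne_top.2 (mul_ne_zero hη hη'))).symm
      _ ≤ ∫⁻ x, ((‖f x‖ₑ / η) ^ q x + (‖g x‖ₑ / η') ^ p x) := lintegral_mono hyoung
      _ = (∫⁻ x, (‖f x‖ₑ / η) ^ q x) + ∫⁻ x, (‖g x‖ₑ / η') ^ p x :=
          lintegral_add_left ((hf.enorm.div_const _).pow hq) _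
      _ ≤ 2 := (add_le_add hfη hgη').trans_eq one_add_one_eq_two
  rw [mul_assoc]
  exact (ENNReal.mul_inv_le_iff (mul_ne_zero hη hη') (ENNReal.mul_ne_top hηt hη't)).1 hint

theorem lintegral_mul_le_two_mul_vLpNorm_mul_vLpNorm (hqp : ∀ x, (q x).HolderConjugate (p x))
    (hq : Measurable q) (hf : Measurable f) (hfq : vLpNorm q f ≠ ∞) (hgp : vLpNorm p g ≠ ∞) :
    ∫⁻ x, ‖f x‖ₑ * ‖g x‖ₑ ≤ 2 * vLpNorm q f * vLpNorm p g := by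
  set X := ∫⁻ x, ‖f x‖ₑ * ‖g x‖ₑ
  have hη' : ∀ η', η' ≠ 0 → η' ≠ ∞ → ∫⁻ x, (‖g x‖ₑ / η') ^ p x ≤ 1 →
      X ≤ vLpNorm q f * (2 * η') := fun η' hη'0 hη't hgη' => by
    have h2η' : 2 * η' ≠ 0 := mul_ne_zero two_ne_zero hη'0
    refine (ENNReal.div_le_iff h2η' (ENNReal.mul_ne_top ENNReal.ofNat_ne_top hη't)).1 ?_
    refine le_vLpNorm fun η hη hfη => ENNReal.div_le_of_le_mul ?_
    calc X ≤ 2 * η * η' :=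
          lintegral_mul_le_two_mul_of_modular_le_one hqp hq hf hη hη'0 hfη hgη'
      _ = η * (2 * η') := by ring
  have hX : X / (2 * vLpNorm q f) ≤ vLpNorm p g := by
    refine le_vLpNorm fun η' hη'0 hgη' => ?_
    rcases eq_or_ne η' ∞ with rfl | hη't
    · exact le_top
    refine ENNReal.div_le_of_le_mul ?_
    calc X ≤ vLpNorm q f * (2 * η') := hη' η' hη'0 hη't hgη'
      _ = η' * (2 * vLpNorm q f) := by ring
  calc X ≤ vLpNorm p g * (2 * vLpNorm q f) :=
        (ENNReal.div_le_iff_le_mul (Or.inr hgp)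
          (Or.inl (ENNReal.mul_ne_top ENNReal.ofNat_ne_top hfq))).1 hX
    _ = 2 * vLpNorm q f * vLpNorm p g := by ring

end Holder

section Indicator

variable {n : ℕ} {q p : EuclideanSpace ℝ (Fin n) → ℝ} {B : Set (EuclideanSpace ℝ (Fin n))}

theorem vLpNorm_indicator_one_le (hq : ∀ x, 1 ≤ q x) (hB : MeasurableSet B) :
    vLpNorm q (B.indicator fun _ => (1 : ℝ)) ≤ max 1 (volume B) := by
  have hmod := lintegral_enorm_indicator_div_rpow (f := fun _ => (1 : ℝ))
    (fun x => one_pos.trans_le (hq x)) hB 1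
  simp only [div_one, enorm_one, ENNReal.one_rpow, setLIntegral_one] at hmod
  exact hmod ▸ vLpNorm_le_max_one_lintegral hq

theorem volume_le_two_mul_vLpNorm_indicator_mul (hqp : ∀ x, (q x).HolderConjugate (p x))
    (hq : Measurable q) (hB : MeasurableSet B) (hBfin : volume B ≠ ∞) :
    volume B ≤ 2 * vLpNorm q (B.indicator fun _ => (1 : ℝ)) *
      vLpNorm p (B.indicator fun _ => (1 : ℝ)) := by
  have hfin : ∀ p' : EuclideanSpace ℝ (Fin n) → ℝ, (∀ x, 1 ≤ p' x) →
      vLpNorm p' (B.indicator fun _ => (1 : ℝ)) ≠ ∞ := fun p' hp' =>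
    ne_top_of_le_ne_top (by simp [hBfin]) (vLpNorm_indicator_one_le hp' hB)
  have hX := lintegral_mul_le_two_mul_vLpNorm_mul_vLpNorm (g := B.indicator fun _ => (1 : ℝ)) hqp hq
    (measurable_const.indicator hB) (hfin q fun x => (hqp x).lt.le)
    (hfin p fun x => (hqp x).symm.lt.le)
  convert hX using 1
  rw [← lintegral_indicator_one hB]
  congr 1 with x
  by_cases hx : x ∈ B <;> simp [hx]

end Indicator

section MaximalOperator

variable {n : ℕ}

theorem maxOp_nonneg (f : EuclideanSpace ℝ (Fin n) → ℝ) (x : EuclideanSpace ℝ (Fin n)) :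
    0 ≤ maxOp f x :=
  Real.iSup_nonneg fun r =>
    mul_nonneg (Real.rpow_nonneg r.2.le _) (integral_nonneg fun _ => abs_nonneg _)

theorem setIntegral_abs_ball_le {f : EuclideanSpace ℝ (Fin n) → ℝ} {C : ℝ}
    (hf : ∀ y, |f y| ≤ C) (x : EuclideanSpace ℝ (Fin n)) {r : ℝ} (hr : 0 ≤ r) :
    ∫ y in ball x r, |f y| ≤ C * (r ^ n * volume.real (ball (0 : EuclideanSpace ℝ (Fin n)) 1)) := by
  have hC : 0 ≤ C := (abs_nonneg _).trans (hf x)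
  calc ∫ y in ball x r, |f y| ≤ ∫ _ in ball x r, C :=
        integral_mono_of_nonneg (.of_forall fun _ => abs_nonneg _)
          (integrableOn_const measure_ball_lt_top.ne) (.of_forall hf)
    _ = C * volume.real (ball x r) := by rw [setIntegral_const, smul_eq_mul, mul_comm]
    _ ≤ C * volume.real (closedBall x r) := by
        gcongr
        exacts [measure_closedBall_lt_top.ne, ball_subset_closedBall]
    _ = C * (r ^ n * volume.real (ball (0 : EuclideanSpace ℝ (Fin n)) 1)) := by
        rw [Measure.addHaar_real_closedBall _ _ hr, finrank_euclideanSpace_fin]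

theorem le_maxOp {f : EuclideanSpace ℝ (Fin n) → ℝ} {C : ℝ} (hf : ∀ y, |f y| ≤ C)
    (x : EuclideanSpace ℝ (Fin n)) {R : ℝ} (hR : 0 < R) :
    R ^ (-(n : ℝ)) * ∫ y in ball x R, |f y| ≤ maxOp f x := by
  refine le_ciSup (f := fun r : {r : ℝ // 0 < r} => (r : ℝ) ^ (-(n : ℝ)) * ∫ y in ball x r, |f y|)
    ⟨C * volume.real (ball (0 : EuclideanSpace ℝ (Fin n)) 1), ?_⟩ ⟨R, hR⟩
  rintro _ ⟨⟨r, hr⟩, rfl⟩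
  calc r ^ (-(n : ℝ)) * ∫ y in ball x r, |f y|
      ≤ r ^ (-(n : ℝ)) * (C * (r ^ n * volume.real (ball (0 : EuclideanSpace ℝ (Fin n)) 1))) :=
        mul_le_mul_of_nonneg_left (setIntegral_abs_ball_le hf x hr.le) (Real.rpow_nonneg hr.le _)
    _ = C * volume.real (ball (0 : EuclideanSpace ℝ (Fin n)) 1) := by
        rw [Real.rpow_neg hr.le, Real.rpow_natCast]
        field_simp

end MaximalOperator

theorem ofReal_three_mul_pow_eq_mul_volume_closedBall {n : ℕ} (c : EuclideanSpace ℝ (Fin n)) {r : ℝ}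
    (hr : 0 ≤ r) :
    ENNReal.ofReal ((3 * r) ^ n) =
      ENNReal.ofReal (3 ^ n) / volume (ball (0 : EuclideanSpace ℝ (Fin n)) 1) *
        volume (closedBall c r) := by
  rw [Measure.addHaar_closedBall _ _ hr, finrank_euclideanSpace_fin, mul_pow,
    ENNReal.ofReal_mul (by positivity), div_eq_mul_inv]
  set ω := volume (ball (0 : EuclideanSpace ℝ (Fin n)) 1)
  calc _ = ENNReal.ofReal (3 ^ n) * ENNReal.ofReal (r ^ n) * (ω⁻¹ * ω) := by
        rw [ENNReal.inv_mul_cancel (measure_ball_pos _ _ one_pos).ne' measure_ball_lt_top.ne,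
          mul_one]
    _ = _ := by ring

section BoundedMaximalOperator

variable {n : ℕ} {q p : EuclideanSpace ℝ (Fin n) → ℝ} {A : ℝ≥0∞}

theorem ofReal_setIntegral_mul_vLpNorm_indicator_le (hq : ∀ x, 0 ≤ q x)
    (hM : ∀ f, vLpNorm q (maxOp f) ≤ A * vLpNorm q f) {t : EuclideanSpace ℝ (Fin n) → ℝ}
    (ht0 : ∀ x, 0 ≤ t x) {C : ℝ} (htC : ∀ x, t x ≤ C) (c : EuclideanSpace ℝ (Fin n)) {r : ℝ}
    (hr : 0 < r) :
    ENNReal.ofReal (∫ y in closedBall c r, t y) *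
        vLpNorm q ((closedBall c r).indicator fun _ => (1 : ℝ)) ≤
      ENNReal.ofReal ((3 * r) ^ n) * (A * vLpNorm q ((closedBall c r).indicator t)) := by
  set B := closedBall c r
  set d := (3 * r) ^ (-(n : ℝ)) * ∫ y in B, t y with hd_def
  have hd : 0 ≤ d := mul_nonneg (Real.rpow_nonneg (by positivity) _) (integral_nonneg ht0)
  have hdM : ∀ x ∈ B, d ≤ maxOp (B.indicator t) x := fun x hx => by
    have hC : ∀ y, |B.indicator t y| ≤ C := fun y => by
      by_cases hy : y ∈ B
      · simpa [hy, abs_of_nonneg (ht0 y)] using htC y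
      · simpa [hy] using (ht0 y).trans (htC y)
    convert le_maxOp hC x (by positivity : 0 < 3 * r) using 2
    simp_rw [abs_of_nonneg (Set.indicator_nonneg (fun y _ => ht0 y) _)]
    rw [setIntegral_indicator measurableSet_closedBall,
      Set.inter_eq_self_of_subset_right (closedBall_subset_ball_three_mul hr hx)]
  have hI : ENNReal.ofReal (∫ y in B, t y) = ENNReal.ofReal ((3 * r) ^ n) * ENNReal.ofReal d := by
    rw [← ENNReal.ofReal_mul (by positivity), hd_def, Real.rpow_neg (by positivity),
      Real.rpow_natCast, mul_inv_cancel_left₀ (by positivity)]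
  rw [hI, mul_assoc]
  gcongr _ * ?_
  calc ENNReal.ofReal d * vLpNorm q (B.indicator fun _ => (1 : ℝ))
      ≤ vLpNorm q fun x => d * B.indicator (fun _ => (1 : ℝ)) x := by
        rw [← Real.enorm_eq_ofReal hd]; exact enorm_mul_vLpNorm_le d
    _ ≤ vLpNorm q (maxOp (B.indicator t)) := vLpNorm_mono hq fun x => by
        by_cases hx : x ∈ B
        · simpa [hx, abs_of_nonneg hd, abs_of_nonneg (maxOp_nonneg _ x)] using hdM x hx
        · simp [hx]
    _ ≤ A * vLpNorm q (B.indicator t) := hM _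

theorem setLIntegral_ofReal_rpow_le_one_of_rpow_le_mul (hA : A ≠ ∞)
    (hM : ∀ f, vLpNorm q (maxOp f) ≤ A * vLpNorm q f)
    (hq : ∀ x, 1 ≤ q x) (c : EuclideanSpace ℝ (Fin n)) {r : ℝ} (hr : 0 < r)
    {t : EuclideanSpace ℝ (Fin n) → ℝ} (ht : Measurable t) (ht0 : ∀ x, 0 ≤ t x) {C : ℝ}
    (htC : ∀ x, t x ≤ C)
    (htq : ∀ x, ENNReal.ofReal (t x) ^ q x ≤
      vLpNorm q ((closedBall c r).indicator fun _ => (1 : ℝ)) /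
        ((A + 1) * ENNReal.ofReal ((3 * r) ^ n)) * ENNReal.ofReal (t x)) :
    ∫⁻ x in closedBall c r, ENNReal.ofReal (t x) ^ q x ≤ 1 := by
  set B := closedBall c r
  set N := vLpNorm q (B.indicator fun _ => (1 : ℝ))
  set P := ENNReal.ofReal ((3 * r) ^ n)
  set ρ := ∫⁻ x in B, ENNReal.ofReal (t x) ^ q x
  have hP0 : P ≠ 0 := by simp [P, hr]
  have hAP0 : (A + 1) * P ≠ 0 := mul_ne_zero (by simp) hP0
  have hAPtop : (A + 1) * P ≠ ∞ := ENNReal.mul_ne_top (by simp [hA]) ENNReal.ofReal_ne_top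
  have hNtop : N ≠ ∞ := ne_top_of_le_ne_top (max_lt ENNReal.one_lt_top measure_closedBall_lt_top).ne
    (vLpNorm_indicator_one_le hq measurableSet_closedBall)
  have htB : IntegrableOn t B :=
    Integrable.mono' (integrableOn_const (C := C) measure_closedBall_lt_top.ne)
      ht.aestronglyMeasurable
      (.of_forall fun x => by simpa [abs_of_nonneg (ht0 x)] using htC x)
  have hρI : ρ ≤ N / ((A + 1) * P) * ENNReal.ofReal (∫ y in B, t y) := by
    rw [ofReal_integral_eq_lintegral_ofReal htB (.of_forall ht0),
      ← lintegral_const_mul _ ht.ennreal_ofReal]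
    exact lintegral_mono htq
  have hρtop : ρ ≠ ∞ := ne_top_of_le_ne_top
    (ENNReal.mul_ne_top (ENNReal.div_ne_top hNtop hAP0) ENNReal.ofReal_ne_top) hρI
  have hnorm : vLpNorm q (B.indicator t) ≤ max 1 ρ := by
    have hmod := lintegral_enorm_indicator_div_rpow (f := t) (B := B)
      (fun x => one_pos.trans_le (hq x)) measurableSet_closedBall 1
    simp only [div_one, Real.enorm_eq_ofReal (ht0 _)] at hmod
    exact (vLpNorm_le_max_one_lintegral hq).trans_eq (by rw [hmod])
  refine le_one_of_add_one_mul_le_mul_max_one hA hρtop ((ENNReal.mul_le_mul_iff_right hP0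
    ENNReal.ofReal_ne_top).1 ?_)
  calc P * ((A + 1) * ρ) = (A + 1) * P * ρ := by ring
    _ ≤ (A + 1) * P * (N / ((A + 1) * P) * ENNReal.ofReal (∫ y in B, t y)) := by gcongr
    _ = ENNReal.ofReal (∫ y in B, t y) * N := by
        rw [← mul_assoc, ENNReal.mul_div_cancel hAP0 hAPtop, mul_comm]
    _ ≤ P * (A * vLpNorm q (B.indicator t)) :=
        ofReal_setIntegral_mul_vLpNorm_indicator_le (fun x => zero_le_one.trans (hq x)) hM ht0 htC
          c hr
    _ ≤ P * (A * max 1 ρ) := by gcongr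

theorem vLpNorm_indicator_mul_vLpNorm_indicator_le (hqp : ∀ x, (q x).HolderConjugate (p x))
    (hq : Measurable q) (hA : A ≠ ∞) (hM : ∀ f, vLpNorm q (maxOp f) ≤ A * vLpNorm q f)
    (c : EuclideanSpace ℝ (Fin n)) {r : ℝ} (hr : 0 < r) :
    vLpNorm q ((closedBall c r).indicator fun _ => (1 : ℝ)) *
        vLpNorm p ((closedBall c r).indicator fun _ => (1 : ℝ)) ≤
      (A + 1) * ENNReal.ofReal ((3 * r) ^ n) := by
  set B := closedBall c r
  set N := vLpNorm q (B.indicator fun _ => (1 : ℝ))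
  set K := (A + 1) * ENNReal.ofReal ((3 * r) ^ n)
  have hq1 : ∀ x, 1 ≤ q x := fun x => (hqp x).lt.le
  have hK0 : K ≠ 0 := mul_ne_zero (by simp) (by simp [hr])
  have hKtop : K ≠ ∞ := ENNReal.mul_ne_top (by simp [hA]) ENNReal.ofReal_ne_top
  have hNtop : N ≠ ∞ := ne_top_of_le_ne_top (max_lt ENNReal.one_lt_top measure_closedBall_lt_top).ne
    (vLpNorm_indicator_one_le hq1 measurableSet_closedBall)
  rcases eq_or_ne N 0 with hN0 | hN0
  · simp [hN0]
  suffices vLpNorm p (B.indicator fun _ => (1 : ℝ)) ≤ K / N by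
    calc N * vLpNorm p (B.indicator fun _ => (1 : ℝ)) ≤ N * (K / N) := by gcongr
      _ = K := ENNReal.mul_div_cancel hN0 hNtop
  refine vLpNorm_le_of_lintegral_le_one (by simp [hK0, hNtop]) ?_
  rw [lintegral_enorm_indicator_div_rpow (fun x => (hqp x).symm.pos) measurableSet_closedBall]
  set β := (N / K).toReal
  have hβ : ENNReal.ofReal β = N / K := ENNReal.ofReal_toReal (ENNReal.div_ne_top hNtop hK0)
  have hβ0 : 0 ≤ β := ENNReal.toReal_nonneg
  set s : EuclideanSpace ℝ (Fin n) → ℝ := fun x => β ^ (q x - 1)⁻¹ with hs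
  have hs_meas : Measurable s := measurable_const.pow (hq.sub_const 1).inv
  have hs0 : ∀ x, 0 ≤ s x := fun x => Real.rpow_nonneg hβ0 _
  have hsq : ∀ x, (‖(1 : ℝ)‖ₑ / (K / N)) ^ p x = ENNReal.ofReal (s x) ^ q x := fun x => by
    rw [enorm_one, one_div, ENNReal.inv_div (Or.inl hNtop) (Or.inl hN0), ← hβ]
    exact ofReal_rpow_eq_ofReal_rpow_inv_sub_one_rpow (hqp x) hβ0
  have hsq1 : ∀ x, s x ^ (q x - 1) = β := fun x => by
    rw [hs, ← Real.rpow_mul hβ0, inv_mul_cancel₀ (hqp x).sub_one_ne_zero, Real.rpow_one]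
  simp_rw [hsq]
  refine lintegral_ofReal_rpow_le_of_forall_min hs_meas hq fun m => ?_
  have ht0 : ∀ x, 0 ≤ min (s x) m := fun x => le_min (hs0 x) m.cast_nonneg
  refine setLIntegral_ofReal_rpow_le_one_of_rpow_le_mul hA hM hq1 c hr
    (hs_meas.min measurable_const) ht0 (fun x => min_le_right _ (m : ℝ)) fun x => ?_
  rw [← hβ, ENNReal.ofReal_rpow_of_nonneg (ht0 x) (zero_le_one.trans (hq1 x)),
    ← ENNReal.ofReal_mul hβ0, ← hsq1 x]
  exact ENNReal.ofReal_le_ofReal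
    (rpow_le_rpow_sub_one_mul_of_le (ht0 x) (min_le_left _ _) (hq1 x))

end BoundedMaximalOperator

theorem stmt12_general (n : ℕ) (q : EuclideanSpace ℝ (Fin n) → ℝ)
    (hqmeas : Measurable q) (hq1 : ∀ x, 1 < q x)
    (hM : ∃ A : ℝ≥0∞, A ≠ ⊤ ∧ ∀ f : EuclideanSpace ℝ (Fin n) → ℝ,
      vLpNorm q (maxOp f) ≤ A * vLpNorm q f) :
    ∃ C : ℝ, 0 < C ∧
      ∀ (c : EuclideanSpace ℝ (Fin n)) (r : ℝ), 0 < r →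
        ENNReal.ofReal C⁻¹ ≤
            (volume (closedBall c r))⁻¹ *
              (vLpNorm q ((closedBall c r).indicator fun _ => (1:ℝ)) *
                vLpNorm (fun x => q x / (q x - 1))
                  ((closedBall c r).indicator fun _ => (1:ℝ))) ∧
          (volume (closedBall c r))⁻¹ *
              (vLpNorm q ((closedBall c r).indicator fun _ => (1:ℝ)) *
                vLpNorm (fun x => q x / (q x - 1))
                  ((closedBall c r).indicator fun _ => (1:ℝ))) ≤
            ENNReal.ofReal C := by
  obtain ⟨A, hA, hMq⟩ := hM
  have hqp : ∀ x, (q x).HolderConjugate (q x / (q x - 1)) := fun x => .conjExponent (hq1 x)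
  set K := (A + 1) * (ENNReal.ofReal (3 ^ n) / volume (ball (0 : EuclideanSpace ℝ (Fin n)) 1))
  have hK : K ≠ ∞ := ENNReal.mul_ne_top (by simp [hA])
    (ENNReal.div_ne_top ENNReal.ofReal_ne_top (measure_ball_pos volume _ one_pos).ne')
  refine ⟨max 2 K.toReal, by positivity, fun c r hr => ?_⟩
  have hv0 : volume (closedBall c r) ≠ 0 := (measure_closedBall_pos volume c hr).ne'
  have hvtop : volume (closedBall c r) ≠ ∞ := measure_closedBall_lt_top.ne
  constructor
  · calc ENNReal.ofReal (max 2 K.toReal)⁻¹ ≤ ENNReal.ofReal 2⁻¹ :=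
          ENNReal.ofReal_le_ofReal (inv_anti₀ two_pos (le_max_left _ _))
      _ = 2⁻¹ := by rw [ENNReal.ofReal_inv_of_pos two_pos, ENNReal.ofReal_ofNat]
      _ ≤ _ := by
          rw [← ENNReal.div_eq_inv_mul, ENNReal.le_div_iff_mul_le (Or.inl hv0) (Or.inl hvtop),
            ENNReal.inv_mul_le_iff two_ne_zero ENNReal.ofNat_ne_top, ← mul_assoc]
          exact volume_le_two_mul_vLpNorm_indicator_mul hqp hqmeas measurableSet_closedBall hvtop
  · calc _ ≤ (volume (closedBall c r))⁻¹ * ((A + 1) * ENNReal.ofReal ((3 * r) ^ n)) := by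
          gcongr _ * ?_
          exact vLpNorm_indicator_mul_vLpNorm_indicator_le hqp hqmeas hA hMq c hr
      _ = K * ((volume (closedBall c r))⁻¹ * volume (closedBall c r)) := by
          rw [ofReal_three_mul_pow_eq_mul_volume_closedBall c hr.le]; ring
      _ = K := by rw [ENNReal.inv_mul_cancel hv0 hvtop, mul_one]
      _ ≤ ENNReal.ofReal (max 2 K.toReal) :=
          (ENNReal.ofReal_toReal hK).symm.le.trans (ENNReal.ofReal_le_ofReal (le_max_right _ _))

/-- if `1 < q₋ ≤ q₊ < ∞` and the maximal operator is bounded on both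
`L^{q(·)}(ℝⁿ)` and `L^{q'(·)}(ℝⁿ)` (`q'(x) = q(x)/(q(x)-1)`), then there exists `C > 0`
with `C⁻¹ ≤ |B|⁻¹ ‖χ_B‖_{L^{q(·)}} ‖χ_B‖_{L^{q'(·)}} ≤ C` for every ball `B`. -/
theorem stmt12 (n : ℕ) (hn : 0 < n) (q : EuclideanSpace ℝ (Fin n) → ℝ)
    (hqmeas : Measurable q) (hq1 : ∀ x, 1 < q x) (hqbdd : ∃ K : ℝ, ∀ x, q x ≤ K)
    (hM : ∃ A : ℝ≥0∞, A ≠ ⊤ ∧ ∀ f : EuclideanSpace ℝ (Fin n) → ℝ,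
      vLpNorm q (maxOp f) ≤ A * vLpNorm q f)
    (hM' : ∃ A : ℝ≥0∞, A ≠ ⊤ ∧ ∀ f : EuclideanSpace ℝ (Fin n) → ℝ,
      vLpNorm (fun x => q x / (q x - 1)) (maxOp f) ≤
        A * vLpNorm (fun x => q x / (q x - 1)) f) :
    ∃ C : ℝ, 0 < C ∧
      ∀ (c : EuclideanSpace ℝ (Fin n)) (r : ℝ), 0 < r →
        ENNReal.ofReal C⁻¹ ≤
            (volume (closedBall c r))⁻¹ *
              (vLpNorm q ((closedBall c r).indicator fun _ => (1:ℝ)) *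
                vLpNorm (fun x => q x / (q x - 1))
                  ((closedBall c r).indicator fun _ => (1:ℝ))) ∧
          (volume (closedBall c r))⁻¹ *
              (vLpNorm q ((closedBall c r).indicator fun _ => (1:ℝ)) *
                vLpNorm (fun x => q x / (q x - 1))
                  ((closedBall c r).indicator fun _ => (1:ℝ))) ≤
            ENNReal.ofReal C :=
  stmt12_general n q hqmeas hq1 hM
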